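/- arXiv:math/0403380 — 5 statements merged into one kernel-verified Lean document; each statement's English description precedes it below -/
import Mathlib

section
/- If γ₀, ..., γ_{2n+1} are the spline coefficients, the local control polygon on I_i is convex (i.e. (d_{i-1}-a_{i-1})/(η_{i-1}-x_{i-1}) ≤ (c_i-d_{i-1})/(ξ_i-η_{i-1}) ≤ (a_i-c_i)/(x_i-ξ_i)) if and only if the slopes of the global control polygon satisfy (γ_{2i-1}-γ_{2i-2})/(η_{i-1}-ξ_{i-1}) ≤ (γ_{2i}-γ_{2i-1})/(ξ_i-η_{i-1}) ≤ (γ_{2i+1}-γ_{2i})/(η_i-ξ_i). -/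
/-! The local B-coefficients `a_{i-1}`, `a_i` lie on the edges of the global control polygon,
so the outer slopes of the local polygon equal those of the global one, and the middle slopes
coincide outright. -/

lemma sub_weightedAvg_div_left (p q u v : ℝ) (hq : q ≠ 0) :
    (v - (q / (p + q) * u + (1 - q / (p + q)) * v)) / q = (v - u) / (p + q) := by
  rw [show v - (q / (p + q) * u + (1 - q / (p + q)) * v) = (v - u) * (q / (p + q)) by ring,
    mul_div_assoc, div_div_cancel_left' hq, div_eq_mul_inv]

lemma weightedAvg_sub_div_right (p q u v : ℝ) (hp : p ≠ 0) (hpq : p + q ≠ 0) :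
    (q / (p + q) * u + (1 - q / (p + q)) * v - u) / p = (v - u) / (p + q) := by
  field_simp
  ring

theorem stmt5_general (xim1 xi θim1 θi θip1 him1 hip1 g0 g1 g2 g3 : ℝ)
    (hhi : xim1 < xi)
    (hθi : 0 < θi)
    (hθip1 : 0 < θip1)
    (hhip1 : 0 < hip1) :
    let hi := xi - xim1
    let ξim1 := xim1 - θim1 * him1
    let ηim1 := xim1 + θi * hi
    let ξi := xi - θi * hi
    let ηi := xi + θip1 * hip1
    let ωim1 := θi * hi / (θim1 * him1 + θi * hi)
    let ωi := θip1 * hip1 / (θi * hi + θip1 * hip1)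
    let a0 := ωim1 * g0 + (1 - ωim1) * g1
    let d := g1
    let c := g2
    let a1 := ωi * g2 + (1 - ωi) * g3
    (((d - a0) / (ηim1 - xim1) ≤ (c - d) / (ξi - ηim1) ∧
      (c - d) / (ξi - ηim1) ≤ (a1 - c) / (xi - ξi)) ↔
     ((g1 - g0) / (ηim1 - ξim1) ≤ (g2 - g1) / (ξi - ηim1) ∧
      (g2 - g1) / (ξi - ηim1) ≤ (g3 - g2) / (ηi - ξi))) := by
  intro hi ξim1 ηim1 ξi ηi ωim1 ωi a0 d c a1
  have hθhi : 0 < θi * hi := mul_pos hθi (sub_pos.mpr hhi)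
  have left_slope : (d - a0) / (ηim1 - xim1) = (g1 - g0) / (ηim1 - ξim1) := by
    rw [show ηim1 - xim1 = θi * hi by ring, show ηim1 - ξim1 = θim1 * him1 + θi * hi by ring]
    exact sub_weightedAvg_div_left _ _ g0 g1 hθhi.ne'
  have right_slope : (a1 - c) / (xi - ξi) = (g3 - g2) / (ηi - ξi) := by
    rw [show xi - ξi = θi * hi by ring, show ηi - ξi = θi * hi + θip1 * hip1 by ring]
    exact weightedAvg_sub_div_right _ _ g2 g3 hθhi.ne' (by positivity)
  rw [left_slope, right_slope]

theorem stmt5 (xim1 xi θim1 θi θip1 him1 hip1 g0 g1 g2 g3 : ℝ)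
    (hhi : xim1 < xi)
    (hθim1 : 0 < θim1) (hθim1' : θim1 ≤ 1/4)
    (hθi : 0 < θi) (hθi' : θi ≤ 1/4)
    (hθip1 : 0 < θip1) (hθip1' : θip1 ≤ 1/4)
    (hhim1 : 0 < him1) (hhip1 : 0 < hip1) :
    let hi := xi - xim1
    let ξim1 := xim1 - θim1 * him1
    let ηim1 := xim1 + θi * hi
    let ξi := xi - θi * hi
    let ηi := xi + θip1 * hip1
    let ωim1 := θi * hi / (θim1 * him1 + θi * hi)
    let ωi := θip1 * hip1 / (θi * hi + θip1 * hip1)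
    let a0 := ωim1 * g0 + (1 - ωim1) * g1
    let d := g1
    let c := g2
    let a1 := ωi * g2 + (1 - ωi) * g3
    (((d - a0) / (ηim1 - xim1) ≤ (c - d) / (ξi - ηim1) ∧
      (c - d) / (ξi - ηim1) ≤ (a1 - c) / (xi - ξi)) ↔
     ((g1 - g0) / (ηim1 - ξim1) ≤ (g2 - g1) / (ξi - ηim1) ∧
      (g2 - g1) / (ξi - ηim1) ≤ (g3 - g2) / (ηi - ξi))) :=
  stmt5_general xim1 xi θim1 θi θip1 him1 hip1 g0 g1 g2 g3 hhi hθi hθip1 hhip1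
end

section
/- Let Hermite data (y_{i-1}, p_{i-1}; y_i, p_i) on I_i = [x_{i-1},x_i] satisfy τ_i := (y_i - y_{i-1})/h_i > 0 and p_{i-1}, p_i > 0, and set μ_i = (p_{i-1}+p_i)/2. If 0 < θ_i < τ_i/(2μ_i) and θ_i ≤ 1/4, then the spline coefficients γ_{2i-1} = y_{i-1} + θ_ih_ip_{i-1}, γ_{2i} = y_i - θ_ih_ip_i satisfy γ_{2i} - γ_{2i-1} = h_i(τ_i - 2θ_iμ_i) > 0; in particular if μ_i ≤ 2τ_i the choice θ_i = 1/4 works. -/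
/-! The gap between the two interior control ordinates is `h (τ - 2θμ)` by direct expansion, and
`θ < τ / (2μ)` with `θ, τ > 0` forces `μ > 0`, hence `2θμ < τ`. -/

section LinearOrderedField

variable {K : Type*} [Field K] [LinearOrder K] [IsStrictOrderedRing K]

theorem mul_lt_of_lt_div_of_pos {a b c : K} (ha : 0 < a) (hb : 0 < b) (h : a < b / c) :
    a * c < b := by
  have hc : 0 < c := (div_pos_iff_of_pos_left hb).mp (ha.trans h)
  exact (lt_div_iff₀ hc).mp h

end LinearOrderedField

theorem hermite_control_gap {K : Type*} [Field K] [NeZero (2 : K)] {h y₀ y₁ p₀ p₁ θ : K} (hh : h ≠ 0) :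
    (y₁ - θ * h * p₁) - (y₀ + θ * h * p₀) = h * ((y₁ - y₀) / h - 2 * θ * ((p₀ + p₁) / 2)) := by
  field_simp
  ring

theorem stmt6_general (h yim1 yi pim1 pi θ : ℝ) (hh : 0 < h) :
    let τ := (yi - yim1) / h
    let μ := (pim1 + pi) / 2
    0 < τ →
    0 < θ → θ < τ / (2 * μ) → θ ≤ 1/4 →
    ((yi - θ * h * pi) - (yim1 + θ * h * pim1) = h * (τ - 2 * θ * μ) ∧
     0 < h * (τ - 2 * θ * μ)) ∧
    (μ ≤ 2 * τ → 0 ≤ h * (τ - 2 * (1/4 : ℝ) * μ)) := by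
  intro τ μ hτ hθ hθτ _
  have hgap : 2 * θ * μ < τ := by
    simpa only [mul_left_comm, mul_comm] using mul_lt_of_lt_div_of_pos hθ hτ hθτ
  refine ⟨⟨hermite_control_gap hh.ne', mul_pos hh (sub_pos.mpr hgap)⟩, fun hμτ => ?_⟩
  exact mul_nonneg hh.le (by linarith)

theorem stmt6 (h yim1 yi pim1 pi θ : ℝ) (hh : 0 < h)
    (hpim1 : 0 < pim1) (hpi : 0 < pi) :
    let τ := (yi - yim1) / h
    let μ := (pim1 + pi) / 2
    0 < τ →
    0 < θ → θ < τ / (2 * μ) → θ ≤ 1/4 →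
    ((yi - θ * h * pi) - (yim1 + θ * h * pim1) = h * (τ - 2 * θ * μ) ∧
     0 < h * (τ - 2 * θ * μ)) ∧
    (μ ≤ 2 * τ → 0 ≤ h * (τ - 2 * (1/4 : ℝ) * μ)) :=
  stmt6_general h yim1 yi pim1 pi θ hh
end

section
/- Let β ∈ [-1,0) and ω ∈ (0,1), and define the corner-cutting map on sequences: δ_{4i-2} = (1/2 - β/4)γ_{2i-1} + (1/2 + β/4)γ_{2i}, δ_{4i-1} = (1/2 + β/4)γ_{2i-1} + (1/2 - β/4)γ_{2i}, δ_{4i} = ((1+ω)/2)γ_{2i} + ((1-ω)/2)γ_{2i+1}, δ_{4i+1} = (ω/2)γ_{2i} + ((2-ω)/2)γ_{2i+1}. Then all four new values are convex combinations of consecutive old values, and if (γ_k) is nondecreasing then (δ_l) is nondecreasing. -/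
open Set

section ConvexCombination

variable {𝕜 : Type*} [Field 𝕜] [LinearOrder 𝕜] [IsStrictOrderedRing 𝕜] {a b s t s' t' : 𝕜}

theorem combo_mem_Icc_min_max (hs : 0 ≤ s) (ht : 0 ≤ t) (hst : s + t = 1) :
    s * a + t * b ∈ Icc (min a b) (max a b) := by
  rw [← uIcc, ← segment_eq_uIcc]
  exact ⟨s, t, hs, ht, hst, rfl⟩

theorem combo_le_combo_of_le (hab : a ≤ b) (hsum : s + t = s' + t') (htt' : t ≤ t') :
    s * a + t * b ≤ s' * a + t' * b := by
  have hs' : s' = s - (t' - t) := by linarith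
  rw [hs']
  nlinarith [mul_nonneg (sub_nonneg.2 htt') (sub_nonneg.2 hab)]

end ConvexCombination

theorem stmt11 (β ω g1 g2 g3 : ℝ) (hβ1 : -1 ≤ β) (hβ0 : β < 0)
    (hω0 : 0 < ω) (hω1 : ω < 1) :
    let δ1 := (1/2 - β/4) * g1 + (1/2 + β/4) * g2
    let δ2 := (1/2 + β/4) * g1 + (1/2 - β/4) * g2
    let δ3 := ((1 + ω)/2) * g2 + ((1 - ω)/2) * g3
    let δ4 := (ω/2) * g2 + ((2 - ω)/2) * g3
    (min g1 g2 ≤ δ1 ∧ δ1 ≤ max g1 g2) ∧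
    (min g1 g2 ≤ δ2 ∧ δ2 ≤ max g1 g2) ∧
    (min g2 g3 ≤ δ3 ∧ δ3 ≤ max g2 g3) ∧
    (min g2 g3 ≤ δ4 ∧ δ4 ≤ max g2 g3) ∧
    (g1 ≤ g2 → g2 ≤ g3 → δ1 ≤ δ2 ∧ δ2 ≤ δ3 ∧ δ3 ≤ δ4) := by
  intro δ1 δ2 δ3 δ4
  have hδ1 : δ1 ∈ Icc (min g1 g2) (max g1 g2) :=
    combo_mem_Icc_min_max (by linarith) (by linarith) (by ring)
  have hδ2 : δ2 ∈ Icc (min g1 g2) (max g1 g2) :=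
    combo_mem_Icc_min_max (by linarith) (by linarith) (by ring)
  have hδ3 : δ3 ∈ Icc (min g2 g3) (max g2 g3) :=
    combo_mem_Icc_min_max (by linarith) (by linarith) (by ring)
  have hδ4 : δ4 ∈ Icc (min g2 g3) (max g2 g3) :=
    combo_mem_Icc_min_max (by linarith) (by linarith) (by ring)
  refine ⟨hδ1, hδ2, hδ3, hδ4, fun h12 h23 => ⟨?_, ?_, ?_⟩⟩
  · exact combo_le_combo_of_le h12 (by ring) (by linarith)
  · calc δ2 ≤ max g1 g2 := hδ2.2
      _ = min g2 g3 := by rw [max_eq_right h12, min_eq_left h23]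
      _ ≤ δ3 := hδ3.1
  · exact combo_le_combo_of_le h23 (by ring) (by linarith)
end

section
/- With the corner-cutting formulas δ_{4i-2} = (1/2-β_i/4)γ_{2i-1}+(1/2+β_i/4)γ_{2i}, δ_{4i-1}=(1/2+β_i/4)γ_{2i-1}+(1/2-β_i/4)γ_{2i}, δ_{4i}=((1+ω_i)/2)γ_{2i}+((1-ω_i)/2)γ_{2i+1}, δ_{4i+1}=(ω_i/2)γ_{2i}+((2-ω_i)/2)γ_{2i+1}, one has |δ_{4i-1}-δ_{4i-2}| = (|β_i|/2)|γ_{2i}-γ_{2i-1}| ≤ (1/2)|γ_{2i}-γ_{2i-1}|, |δ_{4i+1}-δ_{4i}| = (1/2)|γ_{2i+1}-γ_{2i}|, and |δ_{4i}-δ_{4i-1}| ≤ (1/2)max(|γ_{2i+1}-γ_{2i}|, |γ_{2i}-γ_{2i-1}|). Consequently Δ₁ ≤ Δ₀/2 where Δ denotes the maximal absolute difference of consecutive coefficients. -/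
theorem abs_sub_of_add_eq_add {a b a' b' : ℝ} (x y : ℝ) (h : a' + b' = a + b) :
    |(a' * x + b' * y) - (a * x + b * y)| = |b' - b| * |y - x| := by
  rw [← abs_mul]
  congr 1
  linear_combination x * h

theorem abs_mul_add_mul_le {a b : ℝ} (u v : ℝ) (ha : 0 ≤ a) (hb : 0 ≤ b) :
    |a * u + b * v| ≤ a * |u| + b * |v| := by
  calc |a * u + b * v| ≤ |a * u| + |b * v| := abs_add_le _ _
    _ = a * |u| + b * |v| := by rw [abs_mul, abs_mul, abs_of_nonneg ha, abs_of_nonneg hb]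

theorem stmt12_general (β ω g1 g2 g3 : ℝ) (hβ1 : -1 ≤ β) (hβ0 : β < 0)
    (hω1 : ω < 1) :
    let δ1 := (1/2 - β/4) * g1 + (1/2 + β/4) * g2
    let δ2 := (1/2 + β/4) * g1 + (1/2 - β/4) * g2
    let δ3 := ((1 + ω)/2) * g2 + ((1 - ω)/2) * g3
    let δ4 := (ω/2) * g2 + ((2 - ω)/2) * g3
    (|δ2 - δ1| = (|β|/2) * |g2 - g1| ∧ |δ2 - δ1| ≤ (1/2) * |g2 - g1|) ∧
    |δ4 - δ3| = (1/2) * |g3 - g2| ∧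
    |δ3 - δ2| ≤ ((1 - ω)/2) * |g3 - g2| + (1/2 + β/4) * |g2 - g1| ∧
    max |δ2 - δ1| |δ4 - δ3| ≤ (1/2) * max |g2 - g1| |g3 - g2| := by
  intro δ1 δ2 δ3 δ4
  have e1 : |δ2 - δ1| = (|β|/2) * |g2 - g1| := by
    rw [abs_sub_of_add_eq_add g1 g2 (by ring), show 1/2 - β/4 - (1/2 + β/4) = -β/2 by ring,
      abs_div, abs_neg, abs_two]
  have i1 : |δ2 - δ1| ≤ (1/2) * |g2 - g1| := by
    rw [e1]
    gcongr
    exact abs_le.mpr ⟨hβ1, by linarith⟩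
  have e2 : |δ4 - δ3| = (1/2) * |g3 - g2| := by
    rw [abs_sub_of_add_eq_add g2 g3 (by ring), show (2 - ω)/2 - (1 - ω)/2 = 1/2 by ring,
      abs_of_pos one_half_pos]
  have i2 : |δ3 - δ2| ≤ ((1 - ω)/2) * |g3 - g2| + (1/2 + β/4) * |g2 - g1| := by
    rw [show δ3 - δ2 = ((1 - ω)/2) * (g3 - g2) + (1/2 + β/4) * (g2 - g1) by ring]
    exact abs_mul_add_mul_le _ _ (by linarith) (by linarith)
  refine ⟨⟨e1, i1⟩, e2, i2, max_le ?_ ?_⟩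
  · exact i1.trans (by gcongr; exact le_max_left _ _)
  · exact e2.trans_le (by gcongr; exact le_max_right _ _)

theorem stmt12 (β ω g1 g2 g3 : ℝ) (hβ1 : -1 ≤ β) (hβ0 : β < 0)
    (hω0 : 0 < ω) (hω1 : ω < 1) :
    let δ1 := (1/2 - β/4) * g1 + (1/2 + β/4) * g2
    let δ2 := (1/2 + β/4) * g1 + (1/2 - β/4) * g2
    let δ3 := ((1 + ω)/2) * g2 + ((1 - ω)/2) * g3
    let δ4 := (ω/2) * g2 + ((2 - ω)/2) * g3
    (|δ2 - δ1| = (|β|/2) * |g2 - g1| ∧ |δ2 - δ1| ≤ (1/2) * |g2 - g1|) ∧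
    |δ4 - δ3| = (1/2) * |g3 - g2| ∧
    |δ3 - δ2| ≤ ((1 - ω)/2) * |g3 - g2| + (1/2 + β/4) * |g2 - g1| ∧
    max |δ2 - δ1| |δ4 - δ3| ≤ (1/2) * max |g2 - g1| |g3 - g2| :=
  stmt12_general β ω g1 g2 g3 hβ1 hβ0 hω1
end

section
/- Let β_i ∈ [-1,0) with β̄ = max_i β_i, and λ_i = 2(β_i-1)/β_i ∈ [4, λ̄] where λ̄ = 2(β̄-1)/β̄. Then for all i, 2λ_i/(λ_{i-1}+λ_i) - β_i ≥ 8/(λ̄+4) - β̄ = β̄(5-3β̄)/(3β̄-1) > 0. -/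
/-!
Write `λ(β) = 2(β - 1)/β = 2 - 2/β`. On `β < 0` this is increasing, exceeds `2`, and is at least
`4` once `β ≥ -1`. Since `λ_{i-1} ≤ λ̄`, the gap is bounded below by `2λ_i/(λ̄ + λ_i) - β_i`;
as `x ↦ 2x/(λ̄ + x)` is increasing, `λ_i ≥ 4` turns this into `8/(λ̄ + 4) - β_i`, and
`β_i ≤ β̄` finishes the bound. The closed form follows from `λ̄ + 4 = (6β̄ - 2)/β̄`.
-/

/-- The paper's `λ_i`, as a function of `β_i`. -/
noncomputable def splineLambda (β : ℝ) : ℝ := 2 * (β - 1) / β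

lemma splineLambda_eq (β : ℝ) (hβ : β ≠ 0) : splineLambda β = 2 - 2 * β⁻¹ := by
  unfold splineLambda
  field_simp

lemma two_lt_splineLambda {β : ℝ} (hβ : β < 0) : 2 < splineLambda β := by
  rw [splineLambda_eq β hβ.ne]
  linarith [inv_lt_zero.2 hβ]

lemma four_le_splineLambda {β : ℝ} (hβ1 : -1 ≤ β) (hβ0 : β < 0) : 4 ≤ splineLambda β := by
  have : β⁻¹ ≤ -1 := by simpa using (inv_le_inv_of_neg hβ0 (by norm_num : (-1 : ℝ) < 0)).2 hβ1
  rw [splineLambda_eq β hβ0.ne]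
  linarith

lemma splineLambda_le_splineLambda {β γ : ℝ} (hβ : β < 0) (hγ : γ < 0) (h : β ≤ γ) :
    splineLambda β ≤ splineLambda γ := by
  rw [splineLambda_eq β hβ.ne, splineLambda_eq γ hγ.ne]
  linarith [(inv_le_inv_of_neg hγ hβ).2 h]

lemma eight_div_add_four_le_two_mul_div_add {x y z : ℝ} (hx : 4 ≤ x) (hy : 0 < y) (hyz : y ≤ z) :
    8 / (z + 4) ≤ 2 * x / (y + x) := by
  rw [div_le_div_iff₀ (by linarith) (by linarith)]
  nlinarith

lemma eight_div_splineLambda_add_four_sub {β : ℝ} (hβ : β < 0) :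
    8 / (splineLambda β + 4) - β = β * (5 - 3 * β) / (3 * β - 1) := by
  have hβ0 : β ≠ 0 := hβ.ne
  have hden : splineLambda β + 4 = 2 * (3 * β - 1) / β := by
    unfold splineLambda
    field_simp
    ring
  have h3 : 3 * β - 1 ≠ 0 := by linarith
  rw [hden]
  field_simp
  ring

lemma mul_five_sub_three_mul_div_pos {β : ℝ} (hβ : β < 0) : 0 < β * (5 - 3 * β) / (3 * β - 1) :=
  div_pos_of_neg_of_neg (mul_neg_of_neg_of_pos hβ (by linarith)) (by linarith)

theorem stmt16_general (b bprev bbar : ℝ)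
    (hb1 : -1 ≤ b) (hb0 : b < 0) (hp0 : bprev < 0)
    (hbb0 : bbar < 0)
    (hle : b ≤ bbar) (hple : bprev ≤ bbar) :
    let lam := 2 * (b - 1) / b
    let lamprev := 2 * (bprev - 1) / bprev
    let lambar := 2 * (bbar - 1) / bbar
    2 * lam / (lamprev + lam) - b ≥ 8 / (lambar + 4) - bbar ∧
    8 / (lambar + 4) - bbar = bbar * (5 - 3 * bbar) / (3 * bbar - 1) ∧
    0 < bbar * (5 - 3 * bbar) / (3 * bbar - 1) := by
  show 2 * splineLambda b / (splineLambda bprev + splineLambda b) - b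
      ≥ 8 / (splineLambda bbar + 4) - bbar ∧ _
  have hgap : 8 / (splineLambda bbar + 4) ≤
      2 * splineLambda b / (splineLambda bprev + splineLambda b) :=
    eight_div_add_four_le_two_mul_div_add (four_le_splineLambda hb1 hb0)
      ((two_lt_splineLambda hp0).trans' two_pos) (splineLambda_le_splineLambda hp0 hbb0 hple)
  exact ⟨by linarith, eight_div_splineLambda_add_four_sub hbb0, mul_five_sub_three_mul_div_pos hbb0⟩

theorem stmt16 (b bprev bbar : ℝ)
    (hb1 : -1 ≤ b) (hb0 : b < 0) (hp1 : -1 ≤ bprev) (hp0 : bprev < 0)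
    (hbb1 : -1 ≤ bbar) (hbb0 : bbar < 0)
    (hle : b ≤ bbar) (hple : bprev ≤ bbar) :
    let lam := 2 * (b - 1) / b
    let lamprev := 2 * (bprev - 1) / bprev
    let lambar := 2 * (bbar - 1) / bbar
    2 * lam / (lamprev + lam) - b ≥ 8 / (lambar + 4) - bbar ∧
    8 / (lambar + 4) - bbar = bbar * (5 - 3 * bbar) / (3 * bbar - 1) ∧
    0 < bbar * (5 - 3 * bbar) / (3 * bbar - 1) :=
  stmt16_general b bprev bbar hb1 hb0 hp0 hbb0 hle hple
end
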